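/- arXiv:1511.05434 — 6 statements merged into one kernel-verified Lean document; each statement's English description precedes it below -/
import Mathlib

section
/- For n ≥ 2 and 1 ≤ i ≤ n-1, the number of permutations π of {1,...,n} such that the position of i in π is immediately followed by a larger value and the position of i+1 is immediately followed by a smaller value (with the convention π(n+1) = n+1) equals (i-1)(n-2)! + (n-i)(n-2)! + (n-i)(i-1)(n-2)!. -/
/-!
Read `π` as a word followed by the sentinel `n + 1`. A value is then an ascent exactly when it is
not followed by a smaller value, so we count the words in which `i + 1` is followed by a smaller
value and `i` is not. The successor of `i + 1` can be any of the `i` values below it, each choice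
being realised by `(n - 1)!` words. From these we remove the words in which the successor `z` of `i`
is also below `i`: the successor `y` of `i + 1` then differs from `z`, which leaves `(i - 1)²` pairs
`(y, z)`, and two compatible successor constraints are met by exactly `(n - 2)!` words (count the
placements of the one or two blocks they glue together). Hence the count is
`i (n - 1)! - (i - 1)² (n - 2)!`.
-/

/-- Value of the permutation at position `k ∈ [1,n]`, with values in `[1,n]`,
and the convention that positions outside `[1,n]` (in particular `n+1`) get value `n+1`. -/
def pval (n : ℕ) (π : Equiv.Perm (Fin n)) (k : ℕ) : ℕ :=
  if h : k - 1 < n ∧ 1 ≤ k then ((π ⟨k - 1, h.1⟩ : Fin n) : ℕ) + 1 else n + 1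

open Finset Equiv Nat

section
variable {α β : Type*} [Fintype α] [Fintype β] [DecidableEq α] [DecidableEq β]

theorem card_equiv_extending {k : ℕ} {x : Fin k → β} {f : Fin k → α} (hx : x.Injective)
    (hf : f.Injective) (h : Fintype.card β = Fintype.card α) :
    #{e : β ≃ α | ∀ j, e (x j) = f j} = (Fintype.card β - k)! := by
  let e₀ : Set.range x ≃ Set.range f := (Equiv.ofInjective x hx).symm.trans (Equiv.ofInjective f hf)
  have agree : {e : β ≃ α // ∀ j, e (x j) = f j} ≃ {e : β ≃ α // ∀ y : Set.range x, e y = e₀ y} :=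
    Equiv.subtypeEquivRight fun e => by
      constructor
      · rintro h ⟨_, j, rfl⟩
        simp [e₀, h]
      · intro h j
        simpa [e₀] using h ⟨x j, j, rfl⟩
  have hx : Fintype.card ((Set.range x)ᶜ : Set β) = Fintype.card β - k := by
    rw [Fintype.card_compl_set, Set.card_range_of_injective hx, Fintype.card_fin]
  have hf : Fintype.card ((Set.range f)ᶜ : Set α) = Fintype.card β - k := by
    rw [Fintype.card_compl_set, Set.card_range_of_injective hf, Fintype.card_fin, h]
  rw [← Fintype.card_subtype, Fintype.card_congr (agree.trans (Equiv.Set.compl e₀)),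
    Fintype.card_equiv (Fintype.equivOfCardEq (hx.trans hf.symm)), hx]

end

theorem card_filter_exists_mem {ι κ : Type*} (s : Finset ι) (S : Finset κ) (P : ι → κ → Prop)
    [∀ i k, Decidable (P i k)] (hP : ∀ i k k', P i k → P i k' → k = k') :
    #{i ∈ s | ∃ k ∈ S, P i k} = ∑ k ∈ S, #{i ∈ s | P i k} := by
  classical
  rw [← card_biUnion]
  · congr 1; ext i
    simp only [mem_filter, mem_biUnion]
    exact ⟨fun ⟨hi, k, hk, h⟩ => ⟨k, hk, hi, h⟩, fun ⟨k, hk, hi, h⟩ => ⟨hi, k, hk, h⟩⟩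
  · intro k _ k' _ hkk'
    simp only [Function.onFun, disjoint_left, mem_filter]
    exact fun i hi hi' => hkk' (hP i k k' hi.2 hi'.2)

theorem card_filter_exists_and_exists {ι κ μ : Type*} (s : Finset ι) (S : Finset κ) (T : Finset μ)
    (P : ι → κ → Prop) (Q : ι → μ → Prop) [∀ i k, Decidable (P i k)] [∀ i l, Decidable (Q i l)]
    (hP : ∀ i k k', P i k → P i k' → k = k') (hQ : ∀ i l l', Q i l → Q i l' → l = l') :
    #{i ∈ s | (∃ k ∈ S, P i k) ∧ ∃ l ∈ T, Q i l} = ∑ k ∈ S, ∑ l ∈ T, #{i ∈ s | P i k ∧ Q i l} := by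
  simp_rw [and_comm (a := ∃ k ∈ S, P _ k), ← filter_filter, card_filter_exists_mem _ _ _ hP,
    filter_filter, and_comm (b := P _ _), ← filter_filter, card_filter_exists_mem _ _ _ hQ]

theorem card_separated_pairs (m : ℕ) :
    #{pq ∈ range m ×ˢ range m | pq.1 + 1 < pq.2 ∨ pq.2 + 1 < pq.1} = (m - 1) * (m - 2) := by
  have edge : ∀ m : ℕ, ∑ p ∈ range m, (if p + 1 < m ∨ m + 1 < p then 1 else 0) = m - 1 := by
    intro m
    rw [sum_boole, Nat.cast_id, show {p ∈ range m | p + 1 < m ∨ m + 1 < p} = range (m - 1) by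
      ext; simp only [mem_filter, mem_range]; omega, card_range]
  rw [card_filter, sum_product]
  induction m with
  | zero => simp
  | succ m ih =>
    simp only [sum_range_succ, sum_add_distrib, ih, or_comm (a := m + 1 < _), edge, or_self]
    rcases m with _ | _ | m <;> simp
    ring

variable {n : ℕ}

theorem card_perm_symm_val_eq {k : ℕ} {f : Fin k → Fin n} {x : Fin k → ℕ} (hf : f.Injective)
    (hx : x.Injective) (hxn : ∀ j, x j < n) :
    #{π : Perm (Fin n) | ∀ j, (π.symm (f j) : ℕ) = x j} = (n - k)! := by
  rw [card_equiv (Equiv.inv _) (t := {e | ∀ j, e (f j) = ⟨x j, hxn j⟩})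
    fun π => by simp [Fin.ext_iff]]
  simpa using card_equiv_extending hf (fun i j h => hx (congrArg Fin.val h)) rfl

theorem val_symm_eq_iff (π : Perm (Fin n)) {v : Fin n} {p : ℕ} (hp : p < n) :
    (π.symm v : ℕ) = p ↔ π ⟨p, hp⟩ = v := by
  rw [eq_comm (a := π _), ← symm_apply_eq, Fin.ext_iff]

/-- `y` stands immediately after `u` in the word `π 0, π 1, …, π (n - 1)`. -/
def Follows (π : Perm (Fin n)) (u y : Fin n) : Prop :=
  (π.symm y : ℕ) = π.symm u + 1

instance (π : Perm (Fin n)) (u y : Fin n) : Decidable (Follows π u y) :=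
  inferInstanceAs (Decidable (_ = _))

namespace Follows

variable {π : Perm (Fin n)} {u v y z : Fin n}

theorem left_unique (h₁ : Follows π u y) (h₂ : Follows π v y) : u = v :=
  π.symm.injective (Fin.ext (by unfold Follows at h₁ h₂; omega))

theorem right_unique (h₁ : Follows π u y) (h₂ : Follows π u z) : y = z :=
  π.symm.injective (Fin.ext (by unfold Follows at h₁ h₂; omega))

theorem val_symm_add_one_lt (h : Follows π u y) : (π.symm u : ℕ) + 1 < n :=
  h ▸ (π.symm y).isLt

end Follows

theorem card_follows {u y : Fin n} (h : u ≠ y) :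
    #{π : Perm (Fin n) | Follows π u y} = (n - 1)! := by
  have hn : 2 ≤ n := by have := Fin.val_ne_of_ne h; have := y.isLt; omega
  rw [card_eq_sum_card_fiberwise (f := fun π => (π.symm u : ℕ)) (t := range (n - 1))
    fun π hπ => by
      have := (mem_filter.1 hπ).2.val_symm_add_one_lt
      simp only [mem_coe, mem_range]; omega]
  have fiber : ∀ p ∈ range (n - 1),
      #{π ∈ {π : Perm (Fin n) | Follows π u y} | (π.symm u : ℕ) = p} = (n - 2)! := by
    intro p hp
    rw [mem_range] at hp
    rw [filter_filter, ← card_perm_symm_val_eq (f := ![u, y]) (x := ![p, p + 1])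
      (by simp [Function.Injective, Fin.forall_fin_succ, h, h.symm])
      (by simp [Function.Injective, Fin.forall_fin_succ]) (by simp [Fin.forall_fin_succ]; omega)]
    congr 1
    refine filter_congr fun π _ => ?_
    simp [Fin.forall_fin_succ, Follows]
    omega
  rw [sum_congr rfl fiber, sum_const, card_range, smul_eq_mul, show n - 1 = n - 2 + 1 by omega,
    Nat.factorial_succ]

theorem card_follows_chain {u v z : Fin n} (h : Function.Injective ![u, v, z]) :
    #{π : Perm (Fin n) | Follows π u v ∧ Follows π v z} = (n - 2)! := by
  have hn : 3 ≤ n := by simpa using Fintype.card_le_of_injective _ h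
  rw [card_eq_sum_card_fiberwise (f := fun π => (π.symm u : ℕ)) (t := range (n - 2))
    fun π hπ => by
      obtain ⟨h₁, h₂⟩ := (mem_filter.1 hπ).2
      have := h₂.val_symm_add_one_lt; unfold Follows at h₁
      simp only [mem_coe, mem_range]; omega]
  have fiber : ∀ p ∈ range (n - 2),
      #{π ∈ {π : Perm (Fin n) | Follows π u v ∧ Follows π v z} | (π.symm u : ℕ) = p} =
        (n - 3)! := by
    intro p hp
    rw [mem_range] at hp
    rw [filter_filter, ← card_perm_symm_val_eq (f := ![u, v, z]) (x := ![p, p + 1, p + 2]) h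
      (by simp [Function.Injective, Fin.forall_fin_succ]) (by simp [Fin.forall_fin_succ]; omega)]
    congr 1
    refine filter_congr fun π _ => ?_
    simp [Fin.forall_fin_succ, Follows]
    omega
  rw [sum_congr rfl fiber, sum_const, card_range, smul_eq_mul, show n - 2 = n - 3 + 1 by omega,
    Nat.factorial_succ]

theorem card_follows_disjoint {u y v z : Fin n} (h : Function.Injective ![u, y, v, z]) :
    #{π : Perm (Fin n) | Follows π u y ∧ Follows π v z} = (n - 2)! := by
  have hn : 4 ≤ n := by simpa using Fintype.card_le_of_injective _ h
  have huv : u ≠ v := by simpa using h.ne (show (0 : Fin 4) ≠ 2 by decide)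
  have hyv : y ≠ v := by simpa using h.ne (show (1 : Fin 4) ≠ 2 by decide)
  have huz : u ≠ z := by simpa using h.ne (show (0 : Fin 4) ≠ 3 by decide)
  rw [card_eq_sum_card_fiberwise (f := fun π => ((π.symm u : ℕ), (π.symm v : ℕ)))
    (t := {pq ∈ range (n - 1) ×ˢ range (n - 1) | pq.1 + 1 < pq.2 ∨ pq.2 + 1 < pq.1})
    fun π hπ => by
      obtain ⟨h₁, h₂⟩ := (mem_filter.1 hπ).2
      have := h₁.val_symm_add_one_lt; have := h₂.val_symm_add_one_lt
      have : (π.symm u : ℕ) ≠ π.symm v := by simp [Fin.val_inj, huv]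
      have : (π.symm y : ℕ) ≠ π.symm v := by simp [Fin.val_inj, hyv]
      have : (π.symm u : ℕ) ≠ π.symm z := by simp [Fin.val_inj, huz]
      unfold Follows at h₁ h₂
      simp only [coe_filter, mem_product, mem_range, Set.mem_ofPred_eq]
      omega]
  have fiber : ∀ pq ∈ {pq ∈ range (n - 1) ×ˢ range (n - 1) | pq.1 + 1 < pq.2 ∨ pq.2 + 1 < pq.1},
      #{π ∈ {π : Perm (Fin n) | Follows π u y ∧ Follows π v z} |
        ((π.symm u : ℕ), (π.symm v : ℕ)) = pq} = (n - 4)! := by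
    rintro ⟨p, q⟩ hpq
    simp only [mem_filter, mem_product, mem_range] at hpq
    rw [filter_filter, ← card_perm_symm_val_eq (f := ![u, y, v, z]) (x := ![p, p + 1, q, q + 1]) h
      (by simp [Function.Injective, Fin.forall_fin_succ]; omega)
      (by simp [Fin.forall_fin_succ]; omega)]
    congr 1
    refine filter_congr fun π _ => ?_
    simp [Fin.forall_fin_succ, Follows]
    omega
  rw [sum_congr rfl fiber, sum_const, card_separated_pairs, smul_eq_mul]
  obtain ⟨m, rfl⟩ : ∃ m, n = m + 4 := ⟨n - 4, by omega⟩
  simp [Nat.factorial_succ]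
  ring

theorem card_follows_and_follows {u y v z : Fin n} (huv : u ≠ v) (huy : u ≠ y) (hvz : v ≠ z)
    (hyz : y ≠ z) (hcycle : ¬(y = v ∧ z = u)) :
    #{π : Perm (Fin n) | Follows π u y ∧ Follows π v z} = (n - 2)! := by
  by_cases hyv : y = v
  · subst hyv
    have hzu : z ≠ u := fun h => hcycle ⟨rfl, h⟩
    exact card_follows_chain (by simp [Function.Injective, Fin.forall_fin_succ, *, Ne.symm])
  by_cases hzu : z = u
  · subst hzu
    simp_rw [and_comm (a := Follows _ z y)]
    exact card_follows_chain (by simp [Function.Injective, Fin.forall_fin_succ, *, Ne.symm])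
  exact card_follows_disjoint (by simp [Function.Injective, Fin.forall_fin_succ, *, Ne.symm])

def IsDescent (π : Perm (Fin n)) (v : Fin n) : Prop :=
  ∃ y < v, Follows π v y

instance (π : Perm (Fin n)) (v : Fin n) : Decidable (IsDescent π v) :=
  inferInstanceAs (Decidable (∃ y, y < v ∧ Follows π v y))

theorem card_isDescent_and_not_isDescent_add {a b : Fin n} (hab : (a : ℕ) + 1 = b) :
    #{π : Perm (Fin n) | IsDescent π b ∧ ¬IsDescent π a} + a * a * (n - 2)! = b * (n - 1)! := by
  have hdesc : #{π : Perm (Fin n) | IsDescent π b} = b * (n - 1)! := by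
    have := card_filter_exists_mem univ (Iio b) (fun π y => Follows π b y)
      fun π _ _ h h' => h.right_unique h'
    simp only [mem_Iio] at this
    refine this.trans ?_
    rw [sum_congr rfl fun y hy => card_follows (mem_Iio.1 hy).ne', sum_const, Fin.card_Iio,
      smul_eq_mul]
  have hboth : #{π : Perm (Fin n) | IsDescent π b ∧ IsDescent π a} = a * a * (n - 2)! := by
    have hlt : a < b := Fin.lt_def.2 (by omega)
    have hterm : ∀ y ∈ Iio b, ∀ z ∈ Iio a,
        #{π : Perm (Fin n) | Follows π b y ∧ Follows π a z} = if y ≠ z then (n - 2)! else 0 := by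
      intro y hy z hz
      rw [mem_Iio] at hy hz
      split_ifs with hyz
      · exact card_follows_and_follows hlt.ne' hy.ne' hz.ne' hyz
          fun h => (hz.trans hlt).ne h.2
      · rw [not_not] at hyz
        subst hyz
        rw [Finset.card_eq_zero, filter_eq_empty_iff]
        exact fun π _ h => hlt.ne' (h.1.left_unique h.2)
    have := card_filter_exists_and_exists univ (Iio b) (Iio a) (fun π y => Follows π b y)
      (fun π z => Follows π a z) (fun π _ _ h h' => h.right_unique h')
      (fun π _ _ h h' => h.right_unique h')
    simp only [mem_Iio] at this
    refine this.trans ?_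
    rw [sum_comm, sum_congr rfl fun z hz => sum_congr rfl fun y hy => hterm y hy z hz]
    have hrow : ∀ z ∈ Iio a, ∑ y ∈ Iio b, (if y ≠ z then (n - 2)! else 0) = a * (n - 2)! := by
      intro z hz
      have hzb : z ∈ Iio b := mem_Iio.2 ((mem_Iio.1 hz).trans hlt)
      rw [← sum_filter, filter_ne', sum_const, card_erase_of_mem hzb, Fin.card_Iio, smul_eq_mul,
        ← hab, Nat.add_sub_cancel]
    rw [sum_congr rfl hrow, sum_const, Fin.card_Iio, smul_eq_mul, mul_assoc]
  rw [← hdesc, ← hboth, ← card_filter_add_card_filter_not (s := {π | IsDescent π b})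
    (p := fun π => IsDescent π a), filter_filter, filter_filter, add_comm]

theorem pval_succ (π : Perm (Fin n)) (p : Fin n) : pval n π (p + 1) = π p + 1 := by
  simp [pval]

theorem pval_of_lt (π : Perm (Fin n)) {k : ℕ} (hk : n < k) : pval n π k = n + 1 := by
  rw [pval, dif_neg (by omega)]

theorem follows_apply_iff (π : Perm (Fin n)) (p : Fin n) (z : Fin n) :
    Follows π (π p) z ↔ ∃ h : (p : ℕ) + 1 < n, π ⟨p + 1, h⟩ = z := by
  rw [Follows, symm_apply_apply]
  constructor
  · intro h
    exact ⟨h ▸ (π.symm z).isLt, (val_symm_eq_iff π _).1 h⟩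
  · rintro ⟨h, rfl⟩
    simp

theorem pval_succ_succ_lt_iff (π : Perm (Fin n)) (p : Fin n) :
    pval n π (p + 1 + 1) < pval n π (p + 1) ↔ IsDescent π (π p) := by
  simp only [IsDescent, follows_apply_iff, pval_succ]
  by_cases hp : (p : ℕ) + 1 < n
  · rw [show pval n π (p + 1 + 1) = π ⟨p + 1, hp⟩ + 1 from pval_succ π ⟨p + 1, hp⟩]
    constructor
    · intro h
      exact ⟨_, Fin.lt_def.2 (by omega), hp, rfl⟩
    · rintro ⟨z, hz, _, rfl⟩
      exact Nat.succ_lt_succ hz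
  · rw [pval_of_lt π (by omega)]
    simp only [hp, IsEmpty.exists_iff, and_false, exists_false, iff_false, not_lt]
    omega

theorem pval_succ_succ_ne (π : Perm (Fin n)) (p : Fin n) :
    pval n π (p + 1 + 1) ≠ pval n π (p + 1) := by
  rw [pval_succ]
  by_cases hp : (p : ℕ) + 1 < n
  · rw [show pval n π (p + 1 + 1) = π ⟨p + 1, hp⟩ + 1 from pval_succ π ⟨p + 1, hp⟩]
    intro h
    have := π.injective (Fin.ext (Nat.succ_injective h))
    simp [Fin.ext_iff] at this
  · rw [pval_of_lt π (by omega)]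
    omega

theorem pval_succ_lt_iff (π : Perm (Fin n)) (p : Fin n) :
    pval n π (p + 1) < pval n π (p + 1 + 1) ↔ ¬IsDescent π (π p) := by
  rw [← pval_succ_succ_lt_iff, not_lt, (pval_succ_succ_ne π p).symm.le_iff_lt]

theorem forall_ascent_descent_iff (π : Perm (Fin n)) (v w : Fin n) :
    (∀ t, 1 ≤ t → t ≤ n →
      (pval n π t = v + 1 → pval n π t < pval n π (t + 1)) ∧
      (pval n π t = w + 1 → pval n π (t + 1) < pval n π t)) ↔
    IsDescent π w ∧ ¬IsDescent π v := by
  constructor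
  · intro h
    have hw := (h _ (by omega) (π.symm w).isLt).2 (by rw [pval_succ, apply_symm_apply])
    have hv := (h _ (by omega) (π.symm v).isLt).1 (by rw [pval_succ, apply_symm_apply])
    rw [pval_succ_succ_lt_iff, apply_symm_apply] at hw
    rw [pval_succ_lt_iff, apply_symm_apply] at hv
    exact ⟨hw, hv⟩
  · rintro ⟨hw, hv⟩ t ht₁ htn
    obtain ⟨p, rfl⟩ : ∃ p : Fin n, t = p + 1 := ⟨⟨t - 1, by omega⟩, show t = t - 1 + 1 by omega⟩
    refine ⟨fun hpv => ?_, fun hpw => ?_⟩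
    · obtain rfl : π p = v := Fin.ext (by rw [pval_succ] at hpv; omega)
      exact (pval_succ_lt_iff π p).2 hv
    · obtain rfl : π p = w := Fin.ext (by rw [pval_succ] at hpw; omega)
      exact (pval_succ_succ_lt_iff π p).2 hw

theorem stmt0_general (n i : ℕ) (hi1 : 1 ≤ i) (hi2 : i ≤ n - 1) :
    Nat.card {π : Equiv.Perm (Fin n) //
      ∀ t, 1 ≤ t → t ≤ n →
        (pval n π t = i → pval n π t < pval n π (t + 1)) ∧
        (pval n π t = i + 1 → pval n π (t + 1) < pval n π t)} =
    (i - 1) * Nat.factorial (n - 2) + (n - i) * Nat.factorial (n - 2) + (n - i) * (i - 1) * Nat.factorial (n - 2) := by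
  let a : Fin n := ⟨i - 1, by omega⟩
  let b : Fin n := ⟨i, by omega⟩
  have ha : (a : ℕ) + 1 = i := show i - 1 + 1 = i by omega
  have key := card_isDescent_and_not_isDescent_add (show (a : ℕ) + 1 = b from ha)
  rw [Nat.card_eq_fintype_card, Fintype.card_subtype,
    filter_congr fun π _ => by simpa only [ha] using forall_ascent_descent_iff π a b]
  obtain ⟨c, rfl⟩ : ∃ c, i = c + 1 := ⟨i - 1, by omega⟩
  obtain ⟨d, rfl⟩ : ∃ d, n = c + d + 2 := ⟨n - c - 2, by omega⟩
  simp only [a, b, Nat.add_sub_cancel, show c + d + 2 - 1 = c + d + 1 by omega, Nat.factorial_succ,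
    show c + d + 2 - (c + 1) = d + 1 by omega] at key ⊢
  linarith

theorem stmt0 (n i : ℕ) (hn : 2 ≤ n) (hi1 : 1 ≤ i) (hi2 : i ≤ n - 1) :
    Nat.card {π : Equiv.Perm (Fin n) //
      ∀ t, 1 ≤ t → t ≤ n →
        (pval n π t = i → pval n π t < pval n π (t + 1)) ∧
        (pval n π t = i + 1 → pval n π (t + 1) < pval n π t)} =
    (i - 1) * Nat.factorial (n - 2) + (n - i) * Nat.factorial (n - 2) + (n - i) * (i - 1) * Nat.factorial (n - 2) :=
  stmt0_general n i hi1 hi2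
end

section
/- For n ≥ 2, the sum over all permutations π of {1,...,n} of the number of indices i with 1 ≤ i ≤ n-1 such that i is an ascent of π and i+1 is a descent of π (with the convention π(n+1) = n+1) equals (n-1)! · (n² + 4n - 6)/6. -/
open Classical

/-- The value `i` is an ascent of `π`: at the position `t` where `π` takes value `i`,
the next value is larger (with the convention `π(n+1) = n+1`). -/
def IsAscVal (n : ℕ) (π : Equiv.Perm (Fin n)) (i : ℕ) : Prop :=
  ∀ t, 1 ≤ t → t ≤ n → pval n π t = i → pval n π t < pval n π (t + 1)

/-- The value `i` is a descent of `π`. -/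
def IsDescVal (n : ℕ) (π : Equiv.Perm (Fin n)) (i : ℕ) : Prop :=
  ∀ t, 1 ≤ t → t ≤ n → pval n π t = i → pval n π (t + 1) < pval n π t


/-!
Work with 0-indexed values and write `D v` when the value `v` is immediately followed by a smaller
one. The 1-indexed value `v + 1` is an ascent exactly when `¬ D v`, and `v + 2` is a descent exactly
when `D (v + 1)`, so the sum is `∑ v, (#D(v + 1) - #(D(v + 1) ∧ D v))`.

Each count is a disjoint union of classes of permutations taking prescribed values at prescribed
distinct positions; a class with `k` prescribed positions has `(n - k)!` members. The value `y` is
followed by a smaller value in `(n - 1) * y * (n - 2)!` permutations. For the pair, either `v + 1`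
is directly followed by `v` (three prescribed positions) or the two descents occupy disjoint pairs
of adjacent positions (four prescribed positions), and the two cases add up to `v² * (n - 2)!`.
Summing over `v` gives `(n - 1)! * (n² + 4n - 6) / 6`.
-/

open Finset Equiv Function Nat

section Patterns

variable {α : Type*} [Fintype α] [DecidableEq α]

theorem card_perm_forall_apply_eq {k : ℕ} {p v : Fin k → α} (hp : Injective p)
    (hv : Injective v) : #{π : Perm α | ∀ t, π (p t) = v t} = (Fintype.card α - k)! := by
  let e₀ : Set.range p ≃ Set.range v := (Equiv.ofInjective p hp).symm.trans (.ofInjective v hv)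
  have he₀ (t : Fin k) : (e₀ ⟨p t, t, rfl⟩ : α) = v t := by
    simp [e₀, Equiv.ofInjective_symm_apply]
  have card_compl {f : Fin k → α} (hf : Injective f) :
      Fintype.card ↥(Set.range f)ᶜ = Fintype.card α - k := by
    rw [Fintype.card_compl_set, Set.card_range_of_injective hf, Fintype.card_fin]
  rw [← Fintype.card_subtype]
  calc _ = Fintype.card {π : Perm α // ∀ x : Set.range p, π x = e₀ x} :=
        Fintype.card_congr <| Equiv.subtypeEquivRight fun π =>
          ⟨fun h ⟨_, t, ht⟩ => ht ▸ (h t).trans (he₀ t).symm,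
            fun h t => (h ⟨p t, t, rfl⟩).trans (he₀ t)⟩
    _ = Fintype.card (↥(Set.range p)ᶜ ≃ ↥(Set.range v)ᶜ) :=
        Fintype.card_congr (Equiv.Set.compl e₀)
    _ = _ := by
      rw [Fintype.card_equiv (Fintype.equivOfCardEq ((card_compl hp).trans (card_compl hv).symm)),
        card_compl hp]

theorem card_perm_exists_mem_forall_apply_eq {ι : Type*} {k : ℕ} (S : Finset ι)
    (pos val : ι → Fin k → α) (hpos : ∀ i ∈ S, Injective (pos i))
    (hval : ∀ i ∈ S, Injective (val i))
    (hunique : ∀ i ∈ S, ∀ j ∈ S, ∀ π : Perm α,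
      (∀ t, π (pos i t) = val i t) → (∀ t, π (pos j t) = val j t) → i = j) :
    #{π : Perm α | ∃ i ∈ S, ∀ t, π (pos i t) = val i t} = #S * (Fintype.card α - k)! := by
  have hunion : ({π : Perm α | ∃ i ∈ S, ∀ t, π (pos i t) = val i t} : Finset _) =
      S.biUnion fun i => {π | ∀ t, π (pos i t) = val i t} := by
    ext; simp
  rw [hunion, card_biUnion,
    sum_congr rfl fun i hi => card_perm_forall_apply_eq (hpos i hi) (hval i hi), sum_const,
    smul_eq_mul]
  intro i hi j hj hij
  exact disjoint_filter.2 fun π _ h h' => hij (hunique i hi j hj π h h')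

end Patterns

theorem sum_range_sq_mul_six (l : ℕ) :
    (∑ v ∈ range (l + 1), v ^ 2) * 6 = l * (l + 1) * (2 * l + 1) := by
  induction l with
  | zero => simp
  | succ l ih => rw [sum_range_succ, add_mul, ih]; ring

section DescentValues

variable {m : ℕ}

theorem card_consecutive_pairs : #{s : Fin m × Fin m | (s.2 : ℕ) = s.1 + 1} = m - 1 := by
  rcases m with _ | l
  · simp
  have : ({s : Fin (l + 1) × Fin (l + 1) | (s.2 : ℕ) = s.1 + 1} : Finset _) =
      univ.image fun r : Fin l => (r.castSucc, r.succ) := by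
    ext ⟨q, q'⟩
    simp only [mem_filter, mem_univ, true_and, mem_image, Prod.ext_iff, Fin.ext_iff,
      Fin.val_castSucc, Fin.val_succ]
    exact ⟨fun h => ⟨⟨q, by omega⟩, rfl, h.symm⟩, fun ⟨r, h, h'⟩ => by omega⟩
  rw [this, Finset.card_image_of_injective _ fun r r' h => by simpa using h]
  simp

theorem card_separated_pairs_s1 :
    #{s : Fin m × Fin m | (s.1 : ℕ) ≠ s.2 ∧ (s.2 : ℕ) ≠ s.1 + 1 ∧ (s.1 : ℕ) ≠ s.2 + 1} =
      (m - 1) * (m - 2) := by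
  set A : Finset (Fin m × Fin m) := {s | (s.2 : ℕ) = s.1 + 1}
  have hsplit : (univ.offDiag : Finset (Fin m × Fin m)) =
      ({s : Fin m × Fin m | (s.1 : ℕ) ≠ s.2 ∧ (s.2 : ℕ) ≠ s.1 + 1 ∧ (s.1 : ℕ) ≠ s.2 + 1} :
        Finset _) ∪ (A ∪ A.map (Equiv.prodComm _ _).toEmbedding) := by
    ext ⟨q, q'⟩
    simp [A, Fin.ext_iff]
    omega
  have hcard := congrArg card hsplit
  rw [offDiag_card, Finset.card_univ, Fintype.card_fin, card_union_of_disjoint,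
    card_union_of_disjoint, card_map, card_consecutive_pairs] at hcard
  · have : m * m - m = (m - 1) * (m - 2) + ((m - 1) + (m - 1)) := by
      rcases m with _ | _ | k
      · rfl
      · rfl
      · rw [show k + 1 + 1 - 1 = k + 1 by omega, show k + 1 + 1 - 2 = k by omega,
          Nat.sub_eq_iff_eq_add (Nat.le_mul_self _)]
        ring
    omega
  · simp only [disjoint_left, A, mem_filter, mem_univ, true_and, mem_map_equiv, prodComm_symm,
      prodComm_apply, Prod.fst_swap, Prod.snd_swap]
    omega
  · simp [disjoint_left, A]

/-- Values and positions are 0-indexed, and `q : Fin m` stands for the pair of adjacent positions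
`q.castSucc`, `q.succ`. -/
def IsDescValue (π : Perm (Fin (m + 1))) (v : Fin (m + 1)) : Prop :=
  ∃ q : Fin m, π q.castSucc = v ∧ π q.succ < v

def IsFollowedBy (π : Perm (Fin (m + 1))) (a b : Fin (m + 1)) : Prop :=
  ∃ q : Fin m, π q.castSucc = a ∧ π q.succ = b

section Translation

variable (π : Perm (Fin (m + 1)))

theorem pval_val_add_one (p : Fin (m + 1)) : pval (m + 1) π (p + 1) = π p + 1 := by
  rw [pval, dif_pos (by omega)]
  rfl

theorem pval_val_add_two (q : Fin m) : pval (m + 1) π (q + 2) = π q.succ + 1 :=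
  pval_val_add_one π q.succ

theorem pval_add_two : pval (m + 1) π (m + 2) = m + 2 := by
  simp [pval]

theorem forall_pval_eq_iff {P : ℕ → Prop} (w : Fin (m + 1)) :
    (∀ t, 1 ≤ t → t ≤ m + 1 → pval (m + 1) π t = w + 1 → P t) ↔ P (π.symm w + 1) := by
  refine ⟨fun h => h _ (by omega) (by omega) (by simp [pval_val_add_one]),
    fun h t ht₁ ht₂ hw => ?_⟩
  obtain ⟨p, rfl⟩ : ∃ p : Fin (m + 1), t = p + 1 := ⟨⟨t - 1, by omega⟩, by simp; omega⟩
  rw [pval_val_add_one, add_left_inj, Fin.val_inj] at hw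
  rwa [← hw, symm_apply_apply] at h

theorem isDescVal_val_add_one_iff (w : Fin (m + 1)) :
    IsDescVal (m + 1) π (w + 1) ↔ IsDescValue π w := by
  rw [IsDescVal, forall_pval_eq_iff, pval_val_add_one, apply_symm_apply]
  rcases Fin.eq_castSucc_or_eq_last (π.symm w) with ⟨q, hq⟩ | hq
  · rw [hq, Fin.val_castSucc, add_assoc, pval_val_add_two, add_lt_add_iff_right, ← Fin.lt_def]
    rw [symm_apply_eq] at hq
    refine ⟨fun h => ⟨q, hq.symm, h⟩, fun ⟨q', hq', h⟩ => ?_⟩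
    rwa [Fin.castSucc_injective _ (π.injective (hq'.trans hq))] at h
  · rw [hq, Fin.val_last, add_assoc, pval_add_two]
    refine iff_of_false (by omega) fun ⟨q, hq', _⟩ => Fin.castSucc_ne_last q ?_
    rw [← hq, eq_symm_apply, hq']

theorem isAscVal_val_add_one_iff (w : Fin (m + 1)) :
    IsAscVal (m + 1) π (w + 1) ↔ ¬IsDescValue π w := by
  rw [← isDescVal_val_add_one_iff, IsAscVal, IsDescVal, forall_pval_eq_iff, forall_pval_eq_iff,
    pval_val_add_one, apply_symm_apply]
  have hne : pval (m + 1) π (π.symm w + 1 + 1) ≠ w + 1 := by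
    rcases Fin.eq_castSucc_or_eq_last (π.symm w) with ⟨q, hq⟩ | hq
    · rw [hq, Fin.val_castSucc, add_assoc, pval_val_add_two, ne_eq, add_left_inj,
        Fin.val_inj, (symm_apply_eq π).1 hq]
      exact π.injective.ne Fin.castSucc_lt_succ.ne'
    · rw [hq, Fin.val_last, add_assoc, pval_add_two]
      omega
  omega

end Translation

theorem card_isDescValue (y : Fin (m + 1)) :
    #{π | IsDescValue π y} = m * y * (m - 1)! := by
  have h := card_perm_exists_mem_forall_apply_eq (α := Fin (m + 1)) (univ ×ˢ Iio y)
    (fun s : Fin m × Fin (m + 1) => ![s.1.castSucc, s.1.succ]) (fun s => ![y, s.2]) ?_ ?_ ?_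
  · rw [card_product, Finset.card_univ, Fintype.card_fin, Fin.card_Iio, Fintype.card_fin,
      show m + 1 - 2 = m - 1 by omega] at h
    rw [← h]
    congr 1
    refine filter_congr fun π _ => ?_
    simp only [IsDescValue, mem_product, mem_univ, true_and, mem_Iio, Fin.forall_fin_two,
      Matrix.cons_val_zero, Matrix.cons_val_one, Prod.exists, exists_eq_right_right']
    exact ⟨fun ⟨q, hq, hlt⟩ => ⟨q, hlt, hq⟩, fun ⟨q, hlt, hq⟩ => ⟨q, hq, hlt⟩⟩
  · rintro ⟨q, w⟩ -
    rw [← List.nodup_ofFn]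
    simp [Fin.ext_iff]
  · rintro ⟨q, w⟩ hw
    rw [← List.nodup_ofFn]
    simpa [eq_comm] using (mem_Iio.1 (mem_product.1 hw).2).ne
  · rintro ⟨q, w⟩ - ⟨q', w'⟩ - π h h'
    simp only [Fin.forall_fin_two, Matrix.cons_val_zero, Matrix.cons_val_one] at h h'
    obtain rfl : q = q' := Fin.castSucc_injective _ (π.injective (h.1.trans h'.1.symm))
    rw [← h.2, ← h'.2]

theorem card_isDescValue_pair_followedBy (v : Fin m) :
    #{π | (IsDescValue π v.succ ∧ IsDescValue π v.castSucc) ∧ IsFollowedBy π v.succ v.castSucc} =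
      (m - 1) * v * (m - 2)! := by
  have h := card_perm_exists_mem_forall_apply_eq (α := Fin (m + 1))
    (({s : Fin m × Fin m | (s.2 : ℕ) = s.1 + 1} : Finset _) ×ˢ Iio v.castSucc)
    (fun s : (Fin m × Fin m) × Fin (m + 1) => ![s.1.1.castSucc, s.1.1.succ, s.1.2.succ])
    (fun s => ![v.succ, v.castSucc, s.2]) ?_ ?_ ?_
  · rw [card_product, card_consecutive_pairs, Fin.card_Iio, Fin.val_castSucc, Fintype.card_fin,
      show m + 1 - 3 = m - 2 by omega] at h
    rw [← h]
    congr 1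
    refine filter_congr fun π _ => ?_
    simp only [IsDescValue, IsFollowedBy, mem_product, mem_filter, mem_univ, true_and, mem_Iio,
      Fin.forall_fin_succ, Matrix.cons_val_zero, Matrix.cons_val_succ, Matrix.cons_val_fin_one,
      forall_const, Prod.exists, existsAndEq, and_true, exists_and_right]
    constructor
    · rintro ⟨⟨-, q', hx, hw⟩, q, hy, hxq⟩
      have hq' : (q' : ℕ) = q + 1 := by
        simpa using congrArg Fin.val (π.injective (hx.trans hxq.symm))
      exact ⟨q, ⟨q', hq', hw⟩, hy, hxq⟩
    · rintro ⟨q, ⟨q', hq', hw⟩, hy, hxq⟩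
      have hcs : q'.castSucc = q.succ := Fin.ext (by simp [hq'])
      exact ⟨⟨⟨q, hy, hxq ▸ Fin.castSucc_lt_succ⟩, q', hcs ▸ hxq, hw⟩, q, hy, hxq⟩
  · rintro ⟨⟨q, q'⟩, w⟩ hs
    simp only [mem_product, mem_filter, mem_univ, true_and] at hs
    rw [← List.nodup_ofFn]
    simp [Fin.ext_iff]
    omega
  · rintro ⟨⟨q, q'⟩, w⟩ hs
    simp only [mem_product, mem_Iio, Fin.lt_def, Fin.val_castSucc] at hs
    rw [← List.nodup_ofFn]
    simp [Fin.ext_iff]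
    omega
  · rintro ⟨⟨q, q'⟩, w⟩ hs ⟨⟨r, r'⟩, w'⟩ hs' π h h'
    simp only [Fin.forall_fin_succ, Matrix.cons_val_zero, Matrix.cons_val_succ,
      Matrix.cons_val_fin_one, forall_const, mem_product, mem_filter, mem_univ, true_and]
      at h h' hs hs'
    obtain rfl : q = r := Fin.castSucc_injective _ (π.injective (h.1.trans h'.1.symm))
    obtain rfl : q' = r' := Fin.ext (by omega)
    rw [← h.2.2, ← h'.2.2]

theorem separated_of_isDescValue_pair {π : Perm (Fin (m + 1))} {v q q' : Fin m}
    (hy : π q.castSucc = v.succ) (ha : π q.succ ≠ v.castSucc)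
    (hx : π q'.castSucc = v.castSucc) (hb : π q'.succ < v.castSucc) :
    (q : ℕ) ≠ q' ∧ (q' : ℕ) ≠ q + 1 ∧ (q : ℕ) ≠ q' + 1 := by
  refine ⟨fun h => ?_, fun h => ?_, fun h => ?_⟩
  · rw [Fin.val_inj.1 h, hx] at hy
    exact Fin.castSucc_lt_succ.ne hy
  · rw [show q'.castSucc = q.succ from Fin.ext (by simp [h])] at hx
    exact ha hx
  · rw [show q.castSucc = q'.succ from Fin.ext (by simp [h])] at hy
    exact (hb.trans Fin.castSucc_lt_succ).ne hy

theorem card_isDescValue_pair_not_followedBy (v : Fin m) :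
    #{π | (IsDescValue π v.succ ∧ IsDescValue π v.castSucc) ∧ ¬IsFollowedBy π v.succ v.castSucc} =
      (m - 1) * (m - 2) * (v * v - v) * (m - 3)! := by
  have h := card_perm_exists_mem_forall_apply_eq (α := Fin (m + 1))
    (({s : Fin m × Fin m | (s.1 : ℕ) ≠ s.2 ∧ (s.2 : ℕ) ≠ s.1 + 1 ∧ (s.1 : ℕ) ≠ s.2 + 1} :
      Finset _) ×ˢ (Iio v.castSucc).offDiag)
    (fun s : (Fin m × Fin m) × (Fin (m + 1) × Fin (m + 1)) =>
      ![s.1.1.castSucc, s.1.1.succ, s.1.2.castSucc, s.1.2.succ])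
    (fun s => ![v.succ, s.2.1, v.castSucc, s.2.2]) ?_ ?_ ?_
  · rw [card_product, card_separated_pairs_s1, offDiag_card, Fin.card_Iio, Fin.val_castSucc,
      Fintype.card_fin, show m + 1 - 4 = m - 3 by omega] at h
    rw [← h]
    congr 1
    refine filter_congr fun π _ => ?_
    simp only [IsDescValue, IsFollowedBy, not_exists, not_and, ne_eq, mem_product, mem_filter,
      mem_univ, true_and, mem_offDiag, mem_Iio, Fin.forall_fin_succ, Matrix.cons_val_zero,
      Matrix.cons_val_succ, Matrix.cons_val_fin_one, forall_const, Prod.exists, existsAndEq,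
      and_true, EmbeddingLike.apply_eq_iff_eq, Fin.succ_inj]
    constructor
    · rintro ⟨⟨⟨q, hy, ha⟩, q', hx, hb⟩, hnot⟩
      have hax : π q.succ ≠ v.castSucc := hnot q hy
      have ha' : π q.succ < v.castSucc := by
        rw [Fin.lt_def] at ha ⊢
        have := Fin.val_ne_of_ne hax
        simp only [Fin.val_succ, Fin.val_castSucc] at ha this ⊢
        omega
      have hsep := separated_of_isDescValue_pair hy hax hx hb
      exact ⟨q, q', ⟨hsep, ha', hb, fun h => hsep.1 (congrArg Fin.val h)⟩, hy, hx⟩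
    · rintro ⟨q, q', ⟨-, ha, hb, -⟩, hy, hx⟩
      refine ⟨⟨⟨q, hy, ha.trans Fin.castSucc_lt_succ⟩, q', hx, hb⟩, fun r hr hrx => ?_⟩
      obtain rfl : r = q := Fin.castSucc_injective _ (π.injective (hr.trans hy.symm))
      exact (hrx ▸ ha).false
  · rintro ⟨⟨q, q'⟩, w⟩ hs
    simp only [mem_product, mem_filter, mem_univ, true_and] at hs
    rw [← List.nodup_ofFn]
    simp [Fin.ext_iff]
    omega
  · rintro ⟨⟨q, q'⟩, a, b⟩ hs
    simp only [mem_product, mem_offDiag, mem_Iio, Fin.lt_def, Fin.val_castSucc] at hs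
    rw [← List.nodup_ofFn]
    simp [Fin.ext_iff]
    omega
  · rintro ⟨⟨q, q'⟩, a, b⟩ - ⟨⟨r, r'⟩, a', b'⟩ - π h h'
    simp only [Fin.forall_fin_succ, Matrix.cons_val_zero, Matrix.cons_val_succ,
      Matrix.cons_val_fin_one, forall_const] at h h'
    obtain rfl : q = r := Fin.castSucc_injective _ (π.injective (h.1.trans h'.1.symm))
    obtain rfl : q' = r' := Fin.castSucc_injective _ (π.injective (h.2.2.1.trans h'.2.2.1.symm))
    rw [← h.2.1, ← h'.2.1, ← h.2.2.2, ← h'.2.2.2]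

theorem card_isDescValue_pair (v : Fin m) :
    #{π | IsDescValue π v.succ ∧ IsDescValue π v.castSucc} = v ^ 2 * (m - 1)! := by
  rw [← card_filter_add_card_filter_not (fun π => IsFollowedBy π v.succ v.castSucc),
    filter_filter, filter_filter, card_isDescValue_pair_followedBy,
    card_isDescValue_pair_not_followedBy]
  have hv := v.isLt
  rcases m with _ | _ | _ | k
  · exact v.elim0
  · simp
  · interval_cases (v : ℕ) <;> rfl
  · simp only [add_tsub_cancel_right, show k + 3 - 2 = k + 1 by omega,
      show k + 3 - 3 = k by omega, factorial_succ]
    linear_combination (k + 2) * (k + 1) * k ! * Nat.sub_add_cancel (Nat.le_mul_self (v : ℕ))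

theorem card_isDescValue_succ_not_castSucc (v : Fin m) :
    #{π | IsDescValue π v.succ ∧ ¬IsDescValue π v.castSucc} + v ^ 2 * (m - 1)! =
      m * (v + 1) * (m - 1)! := by
  rw [← card_isDescValue_pair, add_comm, ← filter_filter, ← filter_filter,
    card_filter_add_card_filter_not, card_isDescValue, Fin.val_succ]

theorem six_mul_sum_card_isDescValue_succ_not_castSucc :
    6 * ∑ v : Fin m, #{π | IsDescValue π v.succ ∧ ¬IsDescValue π v.castSucc} =
      m ! * (m ^ 2 + 6 * m - 1) := by
  rcases m with _ | l
  · simp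
  have h := sum_congr (s₁ := univ) rfl fun v _ => card_isDescValue_succ_not_castSucc (m := l + 1) v
  rw [sum_add_distrib, ← sum_mul, ← sum_mul, ← mul_sum, Fin.sum_univ_eq_sum_range (· ^ 2),
    Fin.sum_univ_eq_sum_range (· + 1), add_tsub_cancel_right] at h
  have h₁ := sum_range_id_mul_two (l + 2)
  rw [sum_range_succ', add_zero, show l + 2 - 1 = l + 1 from rfl] at h₁
  have h₂ := sum_range_sq_mul_six l
  rw [factorial_succ, show (l + 1) ^ 2 + 6 * (l + 1) - 1 = l ^ 2 + 8 * l + 6 by ring_nf; omega]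
  linear_combination 6 * h - l ! * h₂ + 3 * (l + 1) * l ! * h₁

end DescentValues

theorem stmt1 (n : ℕ) (hn : 2 ≤ n) :
    ∑ π : Equiv.Perm (Fin n),
      ((Finset.Icc 1 (n - 1)).filter
        (fun i => IsAscVal n π i ∧ IsDescVal n π (i + 1))).card =
    Nat.factorial (n - 1) * (n ^ 2 + 4 * n - 6) / 6 := by
  obtain ⟨m, rfl⟩ : ∃ m, n = m + 1 := ⟨n - 1, by omega⟩
  have hterm (v : Fin m) :
      #{π | IsAscVal (m + 1) π (1 + v) ∧ IsDescVal (m + 1) π (1 + v + 1)} =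
        #{π | IsDescValue π v.succ ∧ ¬IsDescValue π v.castSucc} := by
    rw [show 1 + (v : ℕ) = v.castSucc + 1 by simp [add_comm],
      show (v.castSucc : ℕ) + 1 + 1 = v.succ + 1 from rfl]
    simp only [isAscVal_val_add_one_iff, isDescVal_val_add_one_iff, and_comm]
  calc _ = ∑ i ∈ Icc 1 m, #{π | IsAscVal (m + 1) π i ∧ IsDescVal (m + 1) π (i + 1)} :=
        sum_card_bipartiteAbove_eq_sum_card_bipartiteBelow _
    _ = ∑ v : Fin m, #{π | IsDescValue π v.succ ∧ ¬IsDescValue π v.castSucc} := by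
        rw [← Ico_add_one_right_eq_Icc, sum_Ico_eq_sum_range, add_tsub_cancel_right,
          ← Fin.sum_univ_eq_sum_range]
        exact sum_congr rfl fun v _ => hterm v
    _ = _ := by
        rw [add_tsub_cancel_right, show (m + 1) ^ 2 + 4 * (m + 1) - 6 = m ^ 2 + 6 * m - 1 by
          ring_nf; omega, ← six_mul_sum_card_isDescValue_succ_not_castSucc,
          Nat.mul_div_cancel_left _ (by norm_num)]
end

section
/- For n ≥ 2, the identity (n-1)! · (n² + 4n - 6)/6 + (n-1)! = n! · (n+4)/6 holds; equivalently, the total number of corners in all tree-like tableaux of size n equals n! · (n+4)/6. -/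
open Nat

-- `2 ≤ n` keeps the natural subtraction `n ^ 2 + 4 * n - 6` from truncating.
lemma factorial_mul_add_four_eq (n : ℕ) (hn : 2 ≤ n) :
    n ! * (n + 4) = (n - 1)! * (n ^ 2 + 4 * n - 6) + 6 * (n - 1)! := by
  obtain ⟨m, rfl⟩ : ∃ m, n = m + 1 := ⟨n - 1, by omega⟩
  have hsub : (m + 1) ^ 2 + 4 * (m + 1) - 6 + 6 = (m + 1) ^ 2 + 4 * (m + 1) := by
    apply Nat.sub_add_cancel; nlinarith
  rw [Nat.add_sub_cancel, factorial_succ]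
  calc (m + 1) * m ! * (m + 1 + 4)
      = m ! * ((m + 1) ^ 2 + 4 * (m + 1) - 6 + 6) := by rw [hsub]; ring
    _ = m ! * ((m + 1) ^ 2 + 4 * (m + 1) - 6) + 6 * m ! := by ring

theorem stmt2 (n : ℕ) (hn : 2 ≤ n) :
    Nat.factorial (n - 1) * (n ^ 2 + 4 * n - 6) / 6 + Nat.factorial (n - 1) =
      Nat.factorial n * (n + 4) / 6 := by
  -- `(a + 6 b) / 6 = a / 6 + b` holds for floor division, so no divisibility is needed.
  rw [factorial_mul_add_four_eq n hn, Nat.add_mul_div_left _ _ (by norm_num : 0 < 6)]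
end

section
/- For n ≥ 2, the number of pairs (π, k) where π is a permutation of {1,...,n} and π(k) is an ascending run of size 1 (i.e., π(k-1) > π(k) > π(k+1) with the conventions π(0) = n+1 and π(n+1) = 0) equals n! · (n+4)/6. -/
/-!
Precomposing with the permutations of `m` fixed positions (extended by the identity) splits the
permutations of a finite linear order into classes of size `m!`, and each class contains exactly
one permutation that is increasing along those positions (sort them). So a prescribed relative
order of `m` positions occurs in `n!/m!` permutations.

A run of size 1 at an interior position `k` is the pattern `π(k-1) > π(k) > π(k+1)` on three
positions, occurring `n!/6` times; at `k = 1` and `k = n` one comparison is with a sentinel and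
holds automatically, leaving `n!/2`. Summing over positions gives `2·n!/2 + (n-2)·n!/6`.
-/

/-- Value of the permutation at position `k ∈ [1,n]`, with values in `[1,n]`,
and the conventions `π(0) = n+1` and `π(k) = 0` for `k > n`. -/
def pval0 (n : ℕ) (π : Equiv.Perm (Fin n)) (k : ℕ) : ℕ :=
  if k = 0 then n + 1
  else if h : k - 1 < n then ((π ⟨k - 1, h⟩ : Fin n) : ℕ) + 1 else 0

open Equiv Finset Nat

section SortedPattern

variable {α : Type*} [LinearOrder α] {m : ℕ}

theorem Tuple.strictMono_comp_sort {g : Fin m → α} (hg : Function.Injective g) :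
    StrictMono (g ∘ Tuple.sort g) :=
  (Tuple.monotone_sort g).strictMono_of_injective (hg.comp (Tuple.sort g).injective)

theorem Tuple.sort_comp_perm_of_strictMono {g : Fin m → α} (hg : StrictMono g)
    (ρ : Perm (Fin m)) : Tuple.sort (g ∘ ρ) = ρ⁻¹ := by
  refine (Tuple.eq_sort_iff.2 ⟨?_, fun i j hij heq => ?_⟩).symm
  · simpa [Function.comp_def] using hg.monotone
  · simp only [Function.comp_apply, Perm.coe_inv, apply_symm_apply] at heq
    exact absurd (hg.injective heq) hij.ne

theorem Equiv.Perm.viaEmbeddingHom_apply_apply {β : Type*} (f : Fin m ↪ β) (ρ : Perm (Fin m))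
    (i : Fin m) : Perm.viaEmbeddingHom f ρ (f i) = f (ρ i) :=
  Perm.viaEmbedding_apply ρ f i

noncomputable def Equiv.Perm.equivStrictMonoCompProdPerm (f : Fin m ↪ α) :
    Perm α ≃ {π : Perm α // StrictMono (π ∘ f)} × Perm (Fin m) where
  toFun π := (⟨π * Perm.viaEmbeddingHom f (Tuple.sort (π ∘ f)), by
      have := Tuple.strictMono_comp_sort (π.injective.comp f.injective)
      simpa [Function.comp_def, Perm.viaEmbeddingHom_apply_apply] using this⟩,
    (Tuple.sort (π ∘ f))⁻¹)
  invFun p := p.1.1 * Perm.viaEmbeddingHom f p.2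
  left_inv π := by simp [map_inv]
  right_inv := by
    rintro ⟨⟨π₀, hπ₀⟩, ρ⟩
    have hsort : Tuple.sort ((π₀ * Perm.viaEmbeddingHom f ρ) ∘ f) = ρ⁻¹ := by
      have := Tuple.sort_comp_perm_of_strictMono hπ₀ ρ
      simpa [Function.comp_def, Perm.viaEmbeddingHom_apply_apply] using this
    refine Prod.ext (Subtype.ext ?_) ?_ <;> simp only [hsort, map_inv, mul_inv_cancel_right, inv_inv]

open scoped Classical in
theorem Equiv.Perm.card_filter_strictMono_comp_mul_factorial [Fintype α] (f : Fin m ↪ α) :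
    #{π : Perm α | StrictMono (π ∘ f)} * m ! = (Fintype.card α)! := by
  rw [← Fintype.card_perm, Fintype.card_congr (Perm.equivStrictMonoCompProdPerm f), Fintype.card_prod,
    Fintype.card_subtype, Fintype.card_perm, Fintype.card_fin]

theorem Equiv.Perm.card_filter_lt_mul_two [Fintype α] {a b : α} (hab : a ≠ b) :
    #{π : Perm α | π a < π b} * 2 = (Fintype.card α)! := by
  classical
  rw [← card_filter_strictMono_comp_mul_factorial ⟨![a, b], injective_pair_iff_ne.2 hab⟩]
  congr 2 with π
  simp [Fin.strictMono_iff_lt_succ, Fin.forall_fin_succ]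

theorem Equiv.Perm.card_filter_lt_lt_mul_six [Fintype α] {a b c : α} (hab : a ≠ b) (hac : a ≠ c)
    (hbc : b ≠ c) : #{π : Perm α | π a < π b ∧ π b < π c} * 6 = (Fintype.card α)! := by
  classical
  have hinj : Function.Injective ![a, b, c] := by
    rw [Matrix.vecCons, Fin.cons_injective_iff, injective_pair_iff_ne]
    simp [hab, hac, hbc]
  rw [← card_filter_strictMono_comp_mul_factorial ⟨![a, b, c], hinj⟩]
  congr 2 with π
  simp [Fin.strictMono_iff_lt_succ, Fin.forall_fin_succ]

end SortedPattern

section SingletonRuns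

variable {n : ℕ}

theorem pval0_succ (π : Perm (Fin n)) (i : Fin n) : pval0 n π (i + 1) = π i + 1 := by
  simp [pval0]

theorem pval0_zero (π : Perm (Fin n)) : pval0 n π 0 = n + 1 := rfl

theorem pval0_of_lt (π : Perm (Fin n)) {k : ℕ} (hk : n < k) : pval0 n π k = 0 := by
  grind [pval0]

def singletonRunCount (n k : ℕ) : ℕ :=
  #{π : Perm (Fin n) | pval0 n π (k + 1) < pval0 n π k ∧ pval0 n π k < pval0 n π (k - 1)}

theorem singletonRunCount_one_mul_two (hn : 2 ≤ n) : singletonRunCount n 1 * 2 = n ! := by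
  have h := Perm.card_filter_lt_mul_two (α := Fin n) (a := ⟨1, by omega⟩) (b := ⟨0, by omega⟩)
    (by simp [Fin.ext_iff])
  rw [Fintype.card_fin] at h
  rw [← h, singletonRunCount]
  congr 2 with π
  have h2 : pval0 n π 2 = π ⟨1, by omega⟩ + 1 := pval0_succ π ⟨1, by omega⟩
  have h1 : pval0 n π 1 = π ⟨0, by omega⟩ + 1 := pval0_succ π ⟨0, by omega⟩
  have := (π ⟨0, by omega⟩).is_lt
  simp only [mem_filter, mem_univ, true_and, Nat.reduceAdd, Nat.sub_self, h2, h1, pval0_zero,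
    Fin.lt_def]
  omega

theorem singletonRunCount_self_mul_two (hn : 2 ≤ n) : singletonRunCount n n * 2 = n ! := by
  obtain ⟨m, rfl⟩ : ∃ m, n = m + 2 := ⟨n - 2, by omega⟩
  have h := Perm.card_filter_lt_mul_two (α := Fin (m + 2)) (a := ⟨m + 1, by omega⟩)
    (b := ⟨m, by omega⟩) (by simp [Fin.ext_iff])
  rw [Fintype.card_fin] at h
  rw [← h, singletonRunCount]
  congr 2 with π
  have hm2 : pval0 (m + 2) π (m + 2) = π ⟨m + 1, by omega⟩ + 1 := pval0_succ π ⟨m + 1, by omega⟩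
  have hm1 : pval0 (m + 2) π (m + 1) = π ⟨m, by omega⟩ + 1 := pval0_succ π ⟨m, by omega⟩
  simp only [mem_filter, mem_univ, true_and, Nat.reduceSubDiff, hm2, hm1,
    pval0_of_lt π (k := m + 2 + 1) (by omega), Fin.lt_def]
  omega

theorem singletonRunCount_mul_six {k : ℕ} (hk : k ∈ Ioo 1 n) :
    singletonRunCount n k * 6 = n ! := by
  obtain ⟨j, rfl⟩ : ∃ j, k = j + 2 := ⟨k - 2, by grind⟩
  have hjn : j + 2 < n := (mem_Ioo.1 hk).2
  have h := Perm.card_filter_lt_lt_mul_six (α := Fin n) (a := ⟨j + 2, hjn⟩)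
    (b := ⟨j + 1, by omega⟩) (c := ⟨j, by omega⟩) (by simp [Fin.ext_iff])
    (by simp [Fin.ext_iff]) (by simp [Fin.ext_iff])
  rw [Fintype.card_fin] at h
  rw [← h, singletonRunCount]
  congr 2 with π
  have h3 : pval0 n π (j + 2 + 1) = π ⟨j + 2, hjn⟩ + 1 := pval0_succ π ⟨j + 2, hjn⟩
  have h2 : pval0 n π (j + 2) = π ⟨j + 1, by omega⟩ + 1 := pval0_succ π ⟨j + 1, by omega⟩
  have h1 : pval0 n π (j + 1) = π ⟨j, by omega⟩ + 1 := pval0_succ π ⟨j, by omega⟩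
  simp only [mem_filter, mem_univ, true_and, Nat.reduceSubDiff, h3, h2, h1, Fin.lt_def]
  omega

end SingletonRuns

theorem stmt3 (n : ℕ) (hn : 2 ≤ n) :
    ∑ π : Equiv.Perm (Fin n),
      ((Finset.Icc 1 n).filter
        (fun k => pval0 n π (k + 1) < pval0 n π k ∧ pval0 n π k < pval0 n π (k - 1))).card =
    Nat.factorial n * (n + 4) / 6 := by
  have hswap : ∑ π : Perm (Fin n),
      ((Icc 1 n).filter
        (fun k => pval0 n π (k + 1) < pval0 n π k ∧ pval0 n π k < pval0 n π (k - 1))).card =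
      ∑ k ∈ Icc 1 n, singletonRunCount n k :=
    sum_card_bipartiteAbove_eq_sum_card_bipartiteBelow
      (fun π k => pval0 n π (k + 1) < pval0 n π k ∧ pval0 n π k < pval0 n π (k - 1))
  have hinterior : (∑ k ∈ Ioo 1 n, singletonRunCount n k) * 6 = (n - 2) * n ! := by
    rw [sum_mul, sum_congr rfl fun k hk => singletonRunCount_mul_six hk, sum_const, Nat.card_Ioo,
      smul_eq_mul, Nat.sub_sub]
  rw [hswap, ← add_sum_Ioc_eq_sum_Icc (by omega), ← sum_Ioo_add_eq_sum_Ioc (by omega)]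
  refine (Nat.div_eq_of_eq_mul_left (by norm_num) ?_).symm
  obtain ⟨m, rfl⟩ : ∃ m, n = m + 2 := ⟨n - 2, by omega⟩
  have hfirst := singletonRunCount_one_mul_two hn
  have hlast := singletonRunCount_self_mul_two hn
  simp only [Nat.add_sub_cancel] at hinterior
  linarith
end

section
/- The polynomials A_n(a,b;t) = Σ_k A_{a,b}(n,k) t^k defined by the recurrence A_{a,b}(n+1,k) = (a-1+k)·A_{a,b}(n,k) + (b+n+1-k)·A_{a,b}(n,k-1) with A_{a,b}(1,1) = 1 and A_{a,b}(1,k) = 0 for k ≠ 1, satisfy A_n(a,b;1) = (a+b)(a+b+1)···(a+b+n-2) for all n ≥ 2. -/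
/-!
Each coefficient `A n k` feeds `A (n + 1) k` with weight `a - 1 + k` and `A (n + 1) (k + 1)` with
weight `b + n - k`; these add up to `a + b + n - 1` independently of `k`. Hence each row sum is
`a + b + n - 1` times the previous one, provided row `n` vanishes beyond `k = n` (so that no mass
leaks past the summation range), which follows from the recurrence by induction.
-/

open Finset

section EulerianRowSum

variable {R : Type*} [CommRing R]

theorem eulerian_eq_zero_of_lt (a b : R) (A : ℕ → ℕ → R)
    (h1k : ∀ k, k ≠ 1 → A 1 k = 0)
    (hrec : ∀ n k, 1 ≤ n → 1 ≤ k →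
      A (n + 1) k = (a - 1 + k) * A n k + (b + n + 1 - k) * A n (k - 1))
    {n k : ℕ} (hn : 1 ≤ n) (hk : n < k) : A n k = 0 := by
  induction n, hn using Nat.le_induction generalizing k with
  | base => exact h1k k (by omega)
  | succ n hn ih =>
    rw [hrec n k hn (by omega), ih (by omega), ih (by omega)]
    ring

theorem eulerian_sum_row_succ (a b : R) (A : ℕ → ℕ → R)
    (h0 : ∀ n, A n 0 = 0)
    (hrec : ∀ n k, 1 ≤ n → 1 ≤ k →
      A (n + 1) k = (a - 1 + k) * A n k + (b + n + 1 - k) * A n (k - 1))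
    (n : ℕ) (hvanish : A (n + 1) (n + 2) = 0) :
    ∑ k ∈ range (n + 3), A (n + 2) k = (a + b + n) * ∑ k ∈ range (n + 2), A (n + 1) k := by
  have hexpand : ∀ k, A (n + 2) (k + 1) =
      (a + k) * A (n + 1) (k + 1) + (b + (n + 1 : ℕ) - k) * A (n + 1) k := by
    intro k
    rw [hrec (n + 1) (k + 1) (by omega) (by omega), Nat.add_sub_cancel]
    push_cast
    ring
  calc ∑ k ∈ range (n + 3), A (n + 2) k
      = ∑ k ∈ range (n + 2), (a + k) * A (n + 1) (k + 1)
          + ∑ k ∈ range (n + 2), (b + (n + 1 : ℕ) - k) * A (n + 1) k := by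
        rw [sum_range_succ', h0, add_zero, ← sum_add_distrib]
        exact sum_congr rfl fun k _ => hexpand k
    _ = ∑ k ∈ range (n + 1), (a + k) * A (n + 1) (k + 1)
          + ∑ k ∈ range (n + 1), (b + n - k) * A (n + 1) (k + 1) := by
        rw [sum_range_succ _ (n + 1), hvanish, sum_range_succ' _ (n + 1), h0]
        push_cast
        ring_nf
    _ = (a + b + n) * ∑ k ∈ range (n + 2), A (n + 1) k := by
        rw [← sum_add_distrib, sum_range_succ' _ (n + 1), h0, add_zero, mul_sum]
        exact sum_congr rfl fun k _ => by ring

theorem eulerian_sum_row_eq_prod (a b : R) (A : ℕ → ℕ → R)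
    (h11 : A 1 1 = 1)
    (h1k : ∀ k, k ≠ 1 → A 1 k = 0)
    (h0 : ∀ n, A n 0 = 0)
    (hrec : ∀ n k, 1 ≤ n → 1 ≤ k →
      A (n + 1) k = (a - 1 + k) * A n k + (b + n + 1 - k) * A n (k - 1))
    (n : ℕ) : ∑ k ∈ range (n + 2), A (n + 1) k = ∏ j ∈ range n, (a + b + j) := by
  induction n with
  | zero => simp [sum_range_succ, h0, h11]
  | succ n ih =>
    rw [eulerian_sum_row_succ a b A h0 hrec n
      (eulerian_eq_zero_of_lt a b A h1k hrec (by omega) (by omega)), ih, prod_range_succ, mul_comm]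

end EulerianRowSum

theorem stmt8 (a b : ℚ) (A : ℕ → ℕ → ℚ)
    (h11 : A 1 1 = 1)
    (h1k : ∀ k, k ≠ 1 → A 1 k = 0)
    (h0 : ∀ n, A n 0 = 0)
    (hrec : ∀ n k, 1 ≤ n → 1 ≤ k →
      A (n + 1) k = (a - 1 + k) * A n k + (b + n + 1 - k) * A n (k - 1)) :
    ∀ n, 2 ≤ n →
      ∑ k ∈ Finset.range (n + 1), A n k =
        ∏ j ∈ Finset.range (n - 1), (a + b + j) := by
  intro n hn
  obtain ⟨m, rfl⟩ : ∃ m, n = m + 1 := ⟨n - 1, by omega⟩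
  simpa using eulerian_sum_row_eq_prod a b A h11 h1k h0 hrec m
end

section
/- With A_n(t) = Σ_k A_{a,b}(n,k) t^k defined by the recurrence A_{a,b}(n+1,k) = (a-1+k)A_{a,b}(n,k) + (b+n+1-k)A_{a,b}(n,k-1) and A_1(t) = t, the derivative at t = 1 satisfies A_n'(1) = (a + bn + C(n,2) - 1) · (a+b)(a+b+1)···(a+b+n-3) for n ≥ 2. -/
/-!
Pairing the recurrence with a weight `f` moves it onto the weights:
`∑ₖ f k A(n+1,k) = ∑ₖ (f k (a-1+k) + f (k+1) (b+n-k)) A(n,k)`,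
the boundary terms vanishing because `A(n,0) = 0 = A(n,n+1)`.
With `f = 1` this gives `A_{n+1}(1) = (a+b+n-1) A_n(1)`, hence `A_{n+1}(1) = (a+b)⋯(a+b+n-1)`;
with `f k = k` it gives `A'_{n+1}(1) = (a+b+n-2) A'_n(1) + (b+n) A_n(1)`, and the closed form
follows by induction from `A'_2(1) = a + 2b`.
-/

open Finset

structure IsGenEulerianTriangle {R : Type*} [CommRing R] (a b : R) (A : ℕ → ℕ → R) : Prop where
  one_one : A 1 1 = 1
  one_of_ne_one : ∀ k, k ≠ 1 → A 1 k = 0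
  zero : ∀ n, A n 0 = 0
  succ : ∀ n k, 1 ≤ n → 1 ≤ k →
    A (n + 1) k = (a - 1 + k) * A n k + (b + n + 1 - k) * A n (k - 1)

namespace IsGenEulerianTriangle

variable {R : Type*} [CommRing R] {a b : R} {A : ℕ → ℕ → R}

theorem eq_zero_of_lt (hA : IsGenEulerianTriangle a b A) {n k : ℕ} (hn : 1 ≤ n) (hk : n < k) :
    A n k = 0 := by
  induction n, hn using Nat.le_induction generalizing k with
  | base => exact hA.one_of_ne_one k hk.ne'
  | succ n hn ih =>
    rw [hA.succ n k hn (by omega), ih (by omega), ih (by omega), mul_zero, mul_zero, add_zero]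

theorem sum_weighted_succ (hA : IsGenEulerianTriangle a b A) (f : ℕ → R) {n : ℕ} (hn : 1 ≤ n) :
    ∑ k ∈ range (n + 2), f k * A (n + 1) k =
      ∑ k ∈ range (n + 1), (f k * (a - 1 + k) + f (k + 1) * (b + n - k)) * A n k := by
  have hstep : ∀ k, f (k + 1) * A (n + 1) (k + 1) =
      f (k + 1) * (a + k) * A n (k + 1) + f (k + 1) * (b + n - k) * A n k := by
    intro k
    rw [hA.succ n (k + 1) hn (by omega), Nat.add_sub_cancel]
    push_cast
    ring
  rw [sum_range_succ', hA.zero]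
  simp only [hstep, sum_add_distrib]
  rw [sum_range_succ (fun k => f (k + 1) * (a + k) * A n (k + 1)),
    hA.eq_zero_of_lt hn (Nat.lt_succ_self n),
    sum_range_succ' (fun k => (f k * (a - 1 + k) + f (k + 1) * (b + n - k)) * A n k),
    sum_range_succ' (fun k => f (k + 1) * (b + n - k) * A n k), hA.zero]
  simp only [mul_zero, add_zero, ← sum_add_distrib]
  refine sum_congr rfl fun k _ => ?_
  push_cast
  ring

theorem sum_succ_eq (hA : IsGenEulerianTriangle a b A) {n : ℕ} (hn : 1 ≤ n) :
    ∑ k ∈ range (n + 2), A (n + 1) k = (a + b + n - 1) * ∑ k ∈ range (n + 1), A n k := by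
  have h := hA.sum_weighted_succ (fun _ => 1) hn
  simp only [one_mul] at h
  rw [h, mul_sum]
  refine sum_congr rfl fun k _ => ?_
  ring

theorem sum_natCast_mul_succ_eq (hA : IsGenEulerianTriangle a b A) {n : ℕ} (hn : 1 ≤ n) :
    ∑ k ∈ range (n + 2), (k : R) * A (n + 1) k =
      (a + b + n - 2) * ∑ k ∈ range (n + 1), (k : R) * A n k +
        (b + n) * ∑ k ∈ range (n + 1), A n k := by
  rw [hA.sum_weighted_succ (fun k => (k : R)) hn, mul_sum, mul_sum, ← sum_add_distrib]
  refine sum_congr rfl fun k _ => ?_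
  push_cast
  ring

theorem sum_eq_prod (hA : IsGenEulerianTriangle a b A) (n : ℕ) :
    ∑ k ∈ range (n + 2), A (n + 1) k = ∏ j ∈ range n, (a + b + j) := by
  induction n with
  | zero => simp [sum_range_succ, hA.zero, hA.one_one]
  | succ n ih =>
    rw [hA.sum_succ_eq (by omega), ih, prod_range_succ]
    push_cast
    ring

theorem sum_natCast_mul_eq (hA : IsGenEulerianTriangle a b A) (n : ℕ) :
    ∑ k ∈ range (n + 3), (k : R) * A (n + 2) k =
      (a + b * (n + 2 : ℕ) + ((n + 2).choose 2 : ℕ) - 1) * ∏ j ∈ range n, (a + b + j) := by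
  induction n with
  | zero =>
    have hD : ∑ k ∈ range 2, (k : R) * A 1 k = 1 := by simp [sum_range_succ, hA.one_one]
    rw [hA.sum_natCast_mul_succ_eq le_rfl, hD, hA.sum_eq_prod 0, Nat.choose_self]
    push_cast
    ring
  | succ n ih =>
    rw [hA.sum_natCast_mul_succ_eq (by omega), ih, hA.sum_eq_prod (n + 1), prod_range_succ,
      Nat.choose_succ_succ' (n + 2), Nat.choose_one_right]
    push_cast
    ring

end IsGenEulerianTriangle

theorem stmt9 (a b : ℚ) (A : ℕ → ℕ → ℚ)
    (h11 : A 1 1 = 1)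
    (h1k : ∀ k, k ≠ 1 → A 1 k = 0)
    (h0 : ∀ n, A n 0 = 0)
    (hrec : ∀ n k, 1 ≤ n → 1 ≤ k →
      A (n + 1) k = (a - 1 + k) * A n k + (b + n + 1 - k) * A n (k - 1)) :
    ∀ n, 2 ≤ n →
      ∑ k ∈ Finset.range (n + 1), (k : ℚ) * A n k =
        (a + b * n + (Nat.choose n 2 : ℚ) - 1) * ∏ j ∈ Finset.range (n - 2), (a + b + j) := by
  have hA : IsGenEulerianTriangle a b A := ⟨h11, h1k, h0, hrec⟩
  intro n hn
  obtain ⟨m, rfl⟩ := Nat.exists_eq_add_of_le' hn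
  rw [Nat.add_sub_cancel]
  exact hA.sum_natCast_mul_eq m
end
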